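/- arXiv:1701.03813 — 5 statements merged into one kernel-verified Lean document; each statement's English description precedes it below -/
import Mathlib

section
/- For a local hidden variable model, where A_0, A_1, B_0, B_1 are random variables taking values in {-1,+1} with A's independent of B's conditioned on a shared hidden variable λ, the CHSH quantity S = |E[A_0 B_0] + E[A_0 B_1] + E[A_1 B_0] - E[A_1 B_1]| satisfies S ≤ 2. -/
/-- CHSH inequality for local hidden variable models: the hidden variable `ω`
ranges over a finite probability space `μ`; `a i ω`, `b j ω` ∈ {-1,1} are the
deterministic responses. Then
`S = |E[A₀B₀] + E[A₀B₁] + E[A₁B₀] - E[A₁B₁]| ≤ 2`. -/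
theorem chsh_lhv {Ω : Type*} [Fintype Ω] (μ : Ω → ℝ)
    (hμ : ∀ ω, 0 ≤ μ ω) (hsum : ∑ ω, μ ω = 1)
    (a b : Fin 2 → Ω → ℝ)
    (ha : ∀ i ω, a i ω = 1 ∨ a i ω = -1)
    (hb : ∀ j ω, b j ω = 1 ∨ b j ω = -1) :
    |(∑ ω, μ ω * (a 0 ω * b 0 ω)) + (∑ ω, μ ω * (a 0 ω * b 1 ω))
      + (∑ ω, μ ω * (a 1 ω * b 0 ω)) - (∑ ω, μ ω * (a 1 ω * b 1 ω))| ≤ 2 := by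
  have key : (∑ ω, μ ω * (a 0 ω * b 0 ω)) + (∑ ω, μ ω * (a 0 ω * b 1 ω))
      + (∑ ω, μ ω * (a 1 ω * b 0 ω)) - (∑ ω, μ ω * (a 1 ω * b 1 ω))
      = ∑ ω, μ ω * (a 0 ω * b 0 ω + a 0 ω * b 1 ω + a 1 ω * b 0 ω - a 1 ω * b 1 ω) := by
    rw [← Finset.sum_add_distrib, ← Finset.sum_add_distrib, ← Finset.sum_sub_distrib]
    congr 1; funext ω; ring
  rw [key]
  calc |∑ ω, μ ω * (a 0 ω * b 0 ω + a 0 ω * b 1 ω + a 1 ω * b 0 ω - a 1 ω * b 1 ω)|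
      ≤ ∑ ω, |μ ω * (a 0 ω * b 0 ω + a 0 ω * b 1 ω + a 1 ω * b 0 ω - a 1 ω * b 1 ω)| :=
        Finset.abs_sum_le_sum_abs _ _
    _ ≤ ∑ ω, μ ω * 2 := by
        apply Finset.sum_le_sum
        intro ω _
        rw [abs_mul, abs_of_nonneg (hμ ω)]
        apply mul_le_mul_of_nonneg_left _ (hμ ω)
        rcases ha 0 ω with h1 | h1 <;> rcases ha 1 ω with h2 | h2 <;>
          rcases hb 0 ω with h3 | h3 <;> rcases hb 1 ω with h4 | h4 <;>
          rw [h1, h2, h3, h4] <;> norm_num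
    _ = 2 := by rw [← Finset.sum_mul, hsum, one_mul]
end

section
/- In Channel I, if Sender 1 uses alphabet {00, 01} uniformly and Sender 2 sends 00 with probability c and 10 with probability 1-c (independently), then the mutual information I(X₂ : Y₂) between Sender 2's input and Receiver 2's output bit equals 0. -/
/-- Channel I: bits encoded as `Bool` (`false` = 0, `true` = 1); two-bit words
as pairs, e.g. `01 = (false, true)`. Defined cell-by-cell from the table. -/
def channelI (x₁ x₂ : Bool × Bool) : Bool × Bool :=
  match x₁, x₂ with
  | (false,false), (false,false) => (false,false) -- 00,00 ↦ 00
  | (false,false), (false,true ) => (true ,true ) -- 00,01 ↦ 11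
  | (false,false), (true ,false) => (false,true ) -- 00,10 ↦ 01
  | (false,false), (true ,true ) => (true ,false) -- 00,11 ↦ 10
  | (false,true ), (false,false) => (true ,true ) -- 01,00 ↦ 11
  | (false,true ), (false,true ) => (false,false) -- 01,01 ↦ 00
  | (false,true ), (true ,false) => (true ,false) -- 01,10 ↦ 10
  | (false,true ), (true ,true ) => (false,true ) -- 01,11 ↦ 01
  | (true ,false), (false,false) => (true ,false) -- 10,00 ↦ 10
  | (true ,false), (false,true ) => (false,true ) -- 10,01 ↦ 01
  | (true ,false), (true ,false) => (false,false) -- 10,10 ↦ 00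
  | (true ,false), (true ,true ) => (true ,true ) -- 10,11 ↦ 11
  | (true ,true ), (false,false) => (false,true ) -- 11,00 ↦ 01
  | (true ,true ), (false,true ) => (true ,false) -- 11,01 ↦ 10
  | (true ,true ), (true ,false) => (true ,true ) -- 11,10 ↦ 11
  | (true ,true ), (true ,true ) => (false,false) -- 11,11 ↦ 00

open Real in
lemma channelI_aux_half_mul (x : ℝ) (hx : 0 ≤ x) :
    x * logb 2 (1/2 * x) = x * logb 2 x - x := by
  rcases eq_or_lt_of_le hx with h | h
  · simp [← h]
  · rw [logb_mul (by norm_num) (ne_of_gt h), show (1/2:ℝ) = 2⁻¹ by norm_num,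
      logb_inv, logb_self_eq_one (by norm_num)]
    ring

lemma channelI_aux_half : Real.logb 2 (1/2 : ℝ) = -1 := by
  rw [show (1/2:ℝ) = 2⁻¹ by norm_num, Real.logb_inv,
    Real.logb_self_eq_one (by norm_num)]

open Real in
/-- Restricted classical strategy on Channel I: Sender 1 uniform on `{00,01}`,
Sender 2 sends `00` with probability `c` and `10` with probability `1-c`,
independently. Then `I(X₂ : Y₂) = H(X₂) + H(Y₂) - H(X₂,Y₂) = 0`
(entropies in bits, with the convention `0·log 0 = 0`). Here `x : Bool` encodes
Sender 2's choice (`false ↦ 00`, `true ↦ 10`) and `y : Bool` Receiver 2's bit. -/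
theorem channelI_restricted_mutual_information_zero (c : ℝ) (hc0 : 0 ≤ c) (hc1 : c ≤ 1) :
    let pX : Bool → ℝ := fun x => if x then 1 - c else c
    let joint : Bool → Bool → ℝ := fun x y =>
      ∑ a : Bool, (1/2) * pX x *
        (if (channelI (false, a) (if x then (true, false) else (false, false))).2 = y
          then 1 else 0)
    let pY : Bool → ℝ := fun y => ∑ x : Bool, joint x y
    (-(∑ x : Bool, pX x * logb 2 (pX x)))
      + (-(∑ y : Bool, pY y * logb 2 (pY y)))
      - (-(∑ x : Bool, ∑ y : Bool, joint x y * logb 2 (joint x y))) = 0 := by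
  intro pX joint pY
  simp only [pX, joint, pY, Fintype.sum_bool, channelI]
  norm_num
  rw [show 1/2*(1-c)+1/2*c = (1/2:ℝ) by ring, channelI_aux_half]
  linear_combination channelI_aux_half_mul c hc0 +
    channelI_aux_half_mul (1-c) (by linarith)
end

section
/- Let k₀₀, k₀₁, k₁₀, k₁₁ ≥ 0 with k₀₀+k₀₁+k₁₀+k₁₁ = 1, and α, β, γ, δ ∈ [0,1] with α+β+γ+δ ≤ 3. Then the expression -(αk₀₀ log(αk₀₀) + βk₀₁ log(βk₀₁) + γk₁₀ log(γk₁₀) + δk₁₁ log(δk₁₁)) is maximized at k₀₀=k₀₁=k₁₀=k₁₁ = 1/4 and α=β=γ=δ = 3/4, where it attains the value -4·(3/16)·log(3/16) = log(16/3)·(3/4). -/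
private lemma log163_ge_one : 1 ≤ Real.log (16/3) := by
  rw [Real.le_log_iff_exp_le (by norm_num : (0:ℝ) < 16/3)]
  linarith [Real.exp_one_lt_d9]

private lemma log163_le_two : Real.log (16/3) ≤ 2 := by
  rw [Real.log_le_iff_le_exp (by norm_num : (0:ℝ) < 16/3)]
  have h := Real.exp_one_gt_d9
  have e : Real.exp 2 = Real.exp 1 * Real.exp 1 := by
    rw [← Real.exp_add]; norm_num
  nlinarith [Real.exp_pos 1]

private lemma gibbs_term (x s Q : ℝ) (hx : 0 ≤ x) (hs : 0 < s) (hQ : 0 < Q) :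
    x * Real.log (s/Q) - x * Real.log x / 2 ≤ s * Real.sqrt x / Q - x := by
  rcases hx.eq_or_lt with h | h
  · rw [← h]; simp
  · have hu : 0 < Real.sqrt x := Real.sqrt_pos.mpr h
    have key : Real.log (s / (Q * Real.sqrt x)) ≤ s / (Q * Real.sqrt x) - 1 :=
      Real.log_le_sub_one_of_pos (by positivity)
    have e1 : Real.log (s / (Q * Real.sqrt x)) = Real.log (s/Q) - Real.log x / 2 := by
      rw [show s / (Q * Real.sqrt x) = (s/Q) / Real.sqrt x by ring,
        Real.log_div (div_pos hs hQ).ne' hu.ne', Real.log_sqrt hx]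
    have h3 := mul_le_mul_of_nonneg_left key h.le
    rw [e1] at h3
    have e2 : x * (s / (Q * Real.sqrt x)) = s * (x / Real.sqrt x) / Q := by ring
    rw [Real.div_sqrt] at e2
    linarith [h3, e2]

private lemma gibbs4 (x1 x2 x3 x4 s Q : ℝ) (h1 : 0 ≤ x1) (h2 : 0 ≤ x2) (h3 : 0 ≤ x3)
    (h4 : 0 ≤ x4) (hs : 0 < s) (hQ : 0 < Q)
    (hsdef : s = x1 + x2 + x3 + x4)
    (hQdef : Q = Real.sqrt x1 + Real.sqrt x2 + Real.sqrt x3 + Real.sqrt x4) :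
    -(x1 * Real.log x1 + x2 * Real.log x2 + x3 * Real.log x3 + x4 * Real.log x4) ≤
      2 * s * Real.log (Q/s) := by
  have t1 := gibbs_term x1 s Q h1 hs hQ
  have t2 := gibbs_term x2 s Q h2 hs hQ
  have t3 := gibbs_term x3 s Q h3 hs hQ
  have t4 := gibbs_term x4 s Q h4 hs hQ
  have hR : s * Real.sqrt x1 / Q + s * Real.sqrt x2 / Q + s * Real.sqrt x3 / Q
      + s * Real.sqrt x4 / Q = s := by
    field_simp
    rw [hQdef]
  have hsum : x1 * Real.log (s/Q) + x2 * Real.log (s/Q) + x3 * Real.log (s/Q)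
      + x4 * Real.log (s/Q) = s * Real.log (s/Q) := by
    rw [hsdef]; ring
  have e2 : 2 * s * Real.log (Q/s) = -(2 * s * Real.log (s/Q)) := by
    rw [show Real.log (Q/s) = -Real.log (s/Q) by
      rw [← Real.log_inv]; congr 1; rw [inv_div]]
    ring
  linarith [t1, t2, t3, t4, hR, hsum, e2]

set_option maxHeartbeats 1000000 in
private lemma key (x1 x2 x3 x4 : ℝ) (h1 : 0 ≤ x1) (h2 : 0 ≤ x2) (h3 : 0 ≤ x3) (h4 : 0 ≤ x4)
    (hQ3 : (Real.sqrt x1 + Real.sqrt x2 + Real.sqrt x3 + Real.sqrt x4)^2 ≤ 3) :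
    -(x1 * Real.log x1 + x2 * Real.log x2 + x3 * Real.log x3 + x4 * Real.log x4)
      ≤ 3/4 * Real.log (16/3) := by
  have hL1 := log163_ge_one
  have hL2 := log163_le_two
  rcases eq_or_lt_of_le (by positivity : (0:ℝ) ≤ x1 + x2 + x3 + x4) with hs | hs
  · have e1 : x1 = 0 := by linarith
    have e2 : x2 = 0 := by linarith
    have e3 : x3 = 0 := by linarith
    have e4 : x4 = 0 := by linarith
    rw [e1, e2, e3, e4]
    simp
    linarith
  · obtain ⟨s, hsdef⟩ : ∃ s, s = x1 + x2 + x3 + x4 := ⟨_, rfl⟩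
    obtain ⟨Q, hQdef⟩ : ∃ Q, Q = Real.sqrt x1 + Real.sqrt x2 + Real.sqrt x3 + Real.sqrt x4 :=
      ⟨_, rfl⟩
    rw [← hQdef] at hQ3
    rw [← hsdef] at hs
    have hQnn : 0 ≤ Q := by rw [hQdef]; positivity
    have hsQ : s ≤ Q^2 := by
      rw [hsdef, hQdef]
      nlinarith [Real.sq_sqrt h1, Real.sq_sqrt h2, Real.sq_sqrt h3, Real.sq_sqrt h4,
        Real.sqrt_nonneg x1, Real.sqrt_nonneg x2, Real.sqrt_nonneg x3, Real.sqrt_nonneg x4]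
    have hQpos : 0 < Q := by
      rcases hQnn.eq_or_lt with h | h
      · exfalso; rw [← h] at hsQ; nlinarith
      · exact h
    have hG := gibbs4 x1 x2 x3 x4 s Q h1 h2 h3 h4 hs hQpos hsdef hQdef
    have hl : Real.log (3/(4*s)) ≤ 3/(4*s) - 1 := Real.log_le_sub_one_of_pos (by positivity)
    have h2' := mul_le_mul_of_nonneg_left hl hs.le
    have e3 : s * (3/(4*s) - 1) = 3/4 - s := by field_simp
    by_cases hc : s ≤ 3/4
    · have hQ4 : Q^2 ≤ 4*s := by
        rw [hsdef, hQdef]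
        nlinarith [sq_nonneg (Real.sqrt x1 - Real.sqrt x2), sq_nonneg (Real.sqrt x1 - Real.sqrt x3),
          sq_nonneg (Real.sqrt x1 - Real.sqrt x4), sq_nonneg (Real.sqrt x2 - Real.sqrt x3),
          sq_nonneg (Real.sqrt x2 - Real.sqrt x4), sq_nonneg (Real.sqrt x3 - Real.sqrt x4),
          Real.sq_sqrt h1, Real.sq_sqrt h2, Real.sq_sqrt h3, Real.sq_sqrt h4]
      have hlog : Real.log (Q/s) ≤ Real.log (4/s) / 2 := by
        have e : Real.log ((Q/s)^2) = 2 * Real.log (Q/s) := by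
          rw [Real.log_pow]; push_cast; ring
        have hle : (Q/s)^2 ≤ 4/s := by
          rw [div_pow, div_le_div_iff₀ (by positivity) hs]; nlinarith
        have hmono : Real.log ((Q/s)^2) ≤ Real.log (4/s) := by
          apply Real.log_le_log (by positivity) hle
        linarith
      have hmul := mul_le_mul_of_nonneg_left hlog (by linarith : (0:ℝ) ≤ 2*s)
      have hsplit : Real.log (4/s) = Real.log (16/3) + Real.log (3/(4*s)) := by
        rw [← Real.log_mul (by norm_num) (by positivity)]
        congr 1
        field_simp
        ring
      have e4 : s * Real.log (4/s) = s * Real.log (16/3) + s * Real.log (3/(4*s)) := by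
        rw [hsplit]; ring
      have hnn : 0 ≤ (3/4 - s) * (Real.log (16/3) - 1) :=
        mul_nonneg (by linarith) (by linarith)
      linarith [hG, hmul, e4, h2', e3, hnn]
    · push_neg at hc
      have hlog : Real.log (Q/s) ≤ Real.log (3/s^2) / 2 := by
        have e : Real.log ((Q/s)^2) = 2 * Real.log (Q/s) := by
          rw [Real.log_pow]; push_cast; ring
        have hle : (Q/s)^2 ≤ 3/s^2 := by
          rw [div_pow]
          have := mul_le_mul_of_nonneg_right hQ3 (by positivity : (0:ℝ) ≤ (s^2)⁻¹)
          rw [div_eq_mul_inv, div_eq_mul_inv]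
          exact this
        have hmono : Real.log ((Q/s)^2) ≤ Real.log (3/s^2) := by
          apply Real.log_le_log (by positivity) hle
        linarith
      have hmul := mul_le_mul_of_nonneg_left hlog (by linarith : (0:ℝ) ≤ 2*s)
      have hsplit : Real.log (3/s^2) = Real.log (16/3) + 2 * Real.log (3/(4*s)) := by
        have ee : Real.log ((3/(4*s))^2) = 2 * Real.log (3/(4*s)) := by
          rw [Real.log_pow]; push_cast; ring
        rw [← ee, ← Real.log_mul (by norm_num) (by positivity)]
        congr 1
        field_simp
        ring
      have e4 : s * Real.log (3/s^2)
          = s * Real.log (16/3) + 2 * (s * Real.log (3/(4*s))) := by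
        rw [hsplit]; ring
      have hnn : 0 ≤ (s - 3/4) * (2 - Real.log (16/3)) :=
        mul_nonneg (by linarith) (by linarith)
      linarith [hG, hmul, e4, h2', e3, hnn]

open Real in
/-- The first-order capacity expression for Channel II:
`-(αk₀₀ log(αk₀₀) + βk₀₁ log(βk₀₁) + γk₁₀ log(γk₁₀) + δk₁₁ log(δk₁₁))`
(base-2 logarithms, `0·log 0 = 0`) over `kᵢⱼ ≥ 0` summing to `1` and
`α,β,γ,δ ∈ [0,1]` with `α+β+γ+δ ≤ 3`, is maximized at `kᵢⱼ = 1/4`,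
`α = β = γ = δ = 3/4`, where it attains `-4·(3/16)·log₂(3/16) = -(3/4)·log₂(3/16)`. -/
theorem channelII_classical_first_order_max :
    IsGreatest
      {x : ℝ | ∃ k₀₀ k₀₁ k₁₀ k₁₁ α β γ δ : ℝ,
        0 ≤ k₀₀ ∧ 0 ≤ k₀₁ ∧ 0 ≤ k₁₀ ∧ 0 ≤ k₁₁ ∧
        k₀₀ + k₀₁ + k₁₀ + k₁₁ = 1 ∧
        α ∈ Set.Icc (0:ℝ) 1 ∧ β ∈ Set.Icc (0:ℝ) 1 ∧
        γ ∈ Set.Icc (0:ℝ) 1 ∧ δ ∈ Set.Icc (0:ℝ) 1 ∧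
        α + β + γ + δ ≤ 3 ∧
        x = -(α * k₀₀ * logb 2 (α * k₀₀) + β * k₀₁ * logb 2 (β * k₀₁)
              + γ * k₁₀ * logb 2 (γ * k₁₀) + δ * k₁₁ * logb 2 (δ * k₁₁))}
      (-(3 / 4 * logb 2 (3 / 16))) := by
  constructor
  · refine ⟨1/4, 1/4, 1/4, 1/4, 3/4, 3/4, 3/4, 3/4, by norm_num, by norm_num, by norm_num,
      by norm_num, by norm_num, by norm_num [Set.mem_Icc], by norm_num [Set.mem_Icc],
      by norm_num [Set.mem_Icc], by norm_num [Set.mem_Icc], by norm_num, ?_⟩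
    norm_num
    ring
  · rintro x ⟨k1, k2, k3, k4, a, b, c, d, hk1, hk2, hk3, hk4, hks,
      ⟨ha0, ha1⟩, ⟨hb0, hb1⟩, ⟨hc0, hc1⟩, ⟨hd0, hd1⟩, hsum3, rfl⟩
    have hx1 : 0 ≤ a * k1 := mul_nonneg ha0 hk1
    have hx2 : 0 ≤ b * k2 := mul_nonneg hb0 hk2
    have hx3 : 0 ≤ c * k3 := mul_nonneg hc0 hk3
    have hx4 : 0 ≤ d * k4 := mul_nonneg hd0 hk4
    have hQ3 : (Real.sqrt (a*k1) + Real.sqrt (b*k2) + Real.sqrt (c*k3)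
        + Real.sqrt (d*k4))^2 ≤ 3 := by
      rw [Real.sqrt_mul ha0, Real.sqrt_mul hb0, Real.sqrt_mul hc0, Real.sqrt_mul hd0]
      have ca := Real.sq_sqrt ha0
      have cb := Real.sq_sqrt hb0
      have cc := Real.sq_sqrt hc0
      have cd := Real.sq_sqrt hd0
      have c1 := Real.sq_sqrt hk1
      have c2 := Real.sq_sqrt hk2
      have c3 := Real.sq_sqrt hk3
      have c4 := Real.sq_sqrt hk4
      have hks' : Real.sqrt k1 ^ 2 + Real.sqrt k2 ^ 2 + Real.sqrt k3 ^ 2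
          + Real.sqrt k4 ^ 2 = 1 := by rw [c1, c2, c3, c4]; exact hks
      have hsum3' : Real.sqrt a ^ 2 + Real.sqrt b ^ 2 + Real.sqrt c ^ 2
          + Real.sqrt d ^ 2 ≤ 3 := by rw [ca, cb, cc, cd]; exact hsum3
      have hprod : 0 ≤ (3 - (Real.sqrt a ^ 2 + Real.sqrt b ^ 2 + Real.sqrt c ^ 2
          + Real.sqrt d ^ 2)) * (Real.sqrt k1 ^ 2 + Real.sqrt k2 ^ 2
          + Real.sqrt k3 ^ 2 + Real.sqrt k4 ^ 2) :=
        mul_nonneg (by linarith) (by positivity)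
      nlinarith [sq_nonneg (Real.sqrt a * Real.sqrt k2 - Real.sqrt b * Real.sqrt k1),
        sq_nonneg (Real.sqrt a * Real.sqrt k3 - Real.sqrt c * Real.sqrt k1),
        sq_nonneg (Real.sqrt a * Real.sqrt k4 - Real.sqrt d * Real.sqrt k1),
        sq_nonneg (Real.sqrt b * Real.sqrt k3 - Real.sqrt c * Real.sqrt k2),
        sq_nonneg (Real.sqrt b * Real.sqrt k4 - Real.sqrt d * Real.sqrt k2),
        sq_nonneg (Real.sqrt c * Real.sqrt k4 - Real.sqrt d * Real.sqrt k3),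
        hprod, hks']
    have hkey := key (a*k1) (b*k2) (c*k3) (d*k4) hx1 hx2 hx3 hx4 hQ3
    have hlog2 : (0:ℝ) < Real.log 2 := Real.log_pos (by norm_num)
    have h316 : Real.log (3/16) = -Real.log (16/3) := by
      rw [show (3:ℝ)/16 = (16/3)⁻¹ by norm_num, Real.log_inv]
    have expand : -(a * k1 * Real.logb 2 (a*k1) + b * k2 * Real.logb 2 (b*k2)
          + c * k3 * Real.logb 2 (c*k3) + d * k4 * Real.logb 2 (d*k4))
        = (-(a*k1 * Real.log (a*k1) + b*k2 * Real.log (b*k2) + c*k3 * Real.log (c*k3)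
            + d*k4 * Real.log (d*k4))) / Real.log 2 := by
      simp only [Real.logb]; ring
    have expand2 : -(3/4 * Real.logb 2 (3/16)) = (3/4 * Real.log (16/3)) / Real.log 2 := by
      simp only [Real.logb, h316]; ring
    rw [expand, expand2]
    gcongr
end

section
/- The function f(x) = -3x² log(3x²) on (0, 1/√3) has a unique critical-point structure such that for any t, there are at most two points x₁ ≤ x₂ in (0,1) with f'(x₁) = f'(x₂) = t; consequently, the maximum of f(k₀₀)+f(k₀₁)+f(k₁₀)+f(k₁₁) subject to k₀₀+k₀₁+k₁₀+k₁₁ = 1, kᵢⱼ ≥ 0, is attained at k₀₀=k₀₁=k₁₀=k₁₁ = 1/4. -/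
/-!
Writing `f = η ∘ (x ↦ 3x²)` with the entropy function `η u = -u log u`, one finds
`f' x = 12 η x - 6 (1 + log 3) x` for `x > 0`. This is strictly concave, and a strictly concave
function takes each value at most twice.

For the maximum, `log y ≤ y - 1` at `y = 1 / (4x)` gives the quadratic majorant
`f x ≤ 3 (log (16/3) - 2) x² + 3x/2`, with equality at `x = 1/4`. Its leading coefficient is
negative and `∑ kᵢ² ≥ 1/4` when `∑ kᵢ = 1`, so summing gives `∑ f kᵢ ≤ 4 f (1/4)`.
-/

open Real Set

/-- `f(x) = -3x² log(3x²)` (natural logarithm). -/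
noncomputable def fCap (x : ℝ) : ℝ := -(3 * x ^ 2) * Real.log (3 * x ^ 2)

theorem StrictConcaveOn.const_mul {E : Type*} [AddCommMonoid E] [Module ℝ E] {s : Set E}
    {f : E → ℝ} {c : ℝ} (hc : 0 < c) (hf : StrictConcaveOn ℝ s f) :
    StrictConcaveOn ℝ s fun x => c * f x := by
  refine ⟨hf.1, fun x hx y hy hxy a b ha hb hab => ?_⟩
  have := mul_lt_mul_of_pos_left (hf.2 hx hy hxy ha hb hab) hc
  simp only [smul_eq_mul] at this ⊢
  linarith

theorem StrictConcaveOn.eq_or_eq_or_eq_of_apply_eq {𝕜 : Type*} [Field 𝕜] [LinearOrder 𝕜]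
    [IsStrictOrderedRing 𝕜] {s : Set 𝕜} {f : 𝕜 → 𝕜} {t : 𝕜}
    (hf : StrictConcaveOn 𝕜 s f) {x y z : 𝕜} (hx : x ∈ s) (hy : y ∈ s) (hz : z ∈ s)
    (hfx : f x = t) (hfy : f y = t) (hfz : f z = t) : x = y ∨ y = z ∨ x = z := by
  have sorted : ∀ {a b c}, a < b → b < c → a ∈ s → c ∈ s →
      f a = t → f b = t → f c = t → False := by
    intro a b c hab hbc ha hc hfa hfb hfc
    have := hf.slope_anti_adjacent ha hc hab hbc
    simp [hfa, hfb, hfc] at this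
  by_contra! h
  obtain ⟨hxy, hyz, hxz⟩ := h
  rcases hxy.lt_or_gt with h₁ | h₁ <;> rcases hyz.lt_or_gt with h₂ | h₂ <;>
    rcases hxz.lt_or_gt with h₃ | h₃ <;>
    first
    | exact sorted h₁ h₂ ‹_› ‹_› ‹_› ‹_› ‹_›
    | exact sorted h₂ h₁ ‹_› ‹_› ‹_› ‹_› ‹_›
    | exact sorted h₁ h₃ ‹_› ‹_› ‹_› ‹_› ‹_›
    | exact sorted h₃ h₁ ‹_› ‹_› ‹_› ‹_› ‹_›
    | exact sorted h₂ h₃ ‹_› ‹_› ‹_› ‹_› ‹_›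
    | exact sorted h₃ h₂ ‹_› ‹_› ‹_› ‹_› ‹_›

lemma deriv_fCap {x : ℝ} (hx : 0 < x) :
    deriv fCap x = 12 * negMulLog x - 6 * (1 + log 3) * x := by
  have hsq : HasDerivAt (fun x : ℝ => 3 * x ^ 2) (6 * x) x :=
    ((hasDerivAt_pow 2 x).const_mul 3).congr_deriv (by norm_num; ring)
  have h := (hasDerivAt_negMulLog (by positivity : 3 * x ^ 2 ≠ 0)).comp x hsq
  rw [show fCap = negMulLog ∘ fun x => 3 * x ^ 2 from rfl, h.deriv,
    log_mul (by norm_num) (by positivity), log_pow, negMulLog]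
  push_cast
  ring

lemma strictConcaveOn_deriv_fCap : StrictConcaveOn ℝ (Ioi 0) (deriv fCap) := by
  have hlin : ConvexOn ℝ (Ioi 0) fun x : ℝ => 6 * (1 + log 3) * x :=
    (convexOn_id (convex_Ioi 0)).smul (by positivity)
  exact (((strictConcaveOn_negMulLog.subset Ioi_subset_Ici_self (convex_Ioi 0)).const_mul
    (by norm_num : (0:ℝ) < 12)).sub_convexOn hlin).congr fun x hx => (deriv_fCap hx).symm

lemma log_sixteen_div_three_lt_two : log (16 / 3) < 2 := by
  rw [log_lt_iff_lt_exp (by norm_num), show (2:ℝ) = 1 + 1 by norm_num, exp_add]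
  nlinarith [exp_one_gt_d9]

lemma fCap_le_quadratic {x : ℝ} (hx : 0 ≤ x) :
    fCap x ≤ 3 * (log (16 / 3) - 2) * x ^ 2 + 3 / 2 * x := by
  rcases hx.eq_or_lt with rfl | hpos
  · simp [fCap]
  have hlog : log (3 * x ^ 2) = 2 * log (4 * x) - log (16 / 3) := by
    rw [show 3 * x ^ 2 = (4 * x) ^ 2 / (16 / 3) by ring, log_div (by positivity) (by norm_num),
      log_pow]
    push_cast
    ring
  have hx4 : x ^ 2 * (4 * x)⁻¹ = x / 4 := by field_simp
  have := mul_le_mul_of_nonneg_left (one_sub_inv_le_log_of_pos (by positivity : 0 < 4 * x))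
    (by positivity : 0 ≤ 6 * x ^ 2)
  rw [fCap, hlog]
  nlinarith

lemma fCap_one_fourth : fCap (1 / 4) = 3 / 16 * log (16 / 3) := by
  rw [fCap, show (3:ℝ) * (1 / 4) ^ 2 = (16 / 3)⁻¹ by norm_num, log_inv]
  ring

lemma sum_fCap_le (k : Fin 4 → ℝ) (hk : ∀ i, 0 ≤ k i) (hsum : ∑ i, k i = 1) :
    ∑ i, fCap (k i) ≤ 4 * fCap (1 / 4) := by
  have hsq : 1 / 4 ≤ ∑ i, k i ^ 2 := by
    have := sq_sum_le_card_mul_sum_sq (s := Finset.univ) (f := k)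
    rw [hsum, Finset.card_univ, Fintype.card_fin] at this
    norm_num at this
    linarith
  calc ∑ i, fCap (k i) ≤ ∑ i, (3 * (log (16 / 3) - 2) * k i ^ 2 + 3 / 2 * k i) :=
        Finset.sum_le_sum fun i _ => fCap_le_quadratic (hk i)
    _ = 3 * (log (16 / 3) - 2) * ∑ i, k i ^ 2 + 3 / 2 := by
        rw [Finset.sum_add_distrib, ← Finset.mul_sum, ← Finset.mul_sum, hsum, mul_one]
    _ ≤ 3 * (log (16 / 3) - 2) * (1 / 4) + 3 / 2 := by
        gcongr ?_ + _
        exact mul_le_mul_of_nonpos_left hsq (by linarith [log_sixteen_div_three_lt_two])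
    _ = 4 * fCap (1 / 4) := by rw [fCap_one_fourth]; ring

/-- (i) Each value of `f'` is attained at no more than two points of `(0,1)`;
(ii) consequently the maximum of `f(k₀₀)+f(k₀₁)+f(k₁₀)+f(k₁₁)` over
nonnegative `kᵢⱼ` summing to `1` is attained at `kᵢⱼ = 1/4`. -/
theorem fCap_deriv_two_points_and_max :
    (∀ t : ℝ, ∀ x y z : ℝ,
      x ∈ Set.Ioo (0:ℝ) 1 → y ∈ Set.Ioo (0:ℝ) 1 → z ∈ Set.Ioo (0:ℝ) 1 →
      deriv fCap x = t → deriv fCap y = t → deriv fCap z = t →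
      x = y ∨ y = z ∨ x = z) ∧
    IsGreatest
      {s : ℝ | ∃ k : Fin 4 → ℝ, (∀ i, 0 ≤ k i) ∧ (∑ i, k i) = 1 ∧
        s = ∑ i, fCap (k i)}
      (4 * fCap (1 / 4)) := by
  refine ⟨fun t x y z hx hy hz hfx hfy hfz =>
    strictConcaveOn_deriv_fCap.eq_or_eq_or_eq_of_apply_eq hx.1 hy.1 hz.1 hfx hfy hfz, ?_, ?_⟩
  · exact ⟨fun _ => 1 / 4, fun _ => by norm_num, by norm_num, by simp⟩
  · rintro s ⟨k, hk, hsum, rfl⟩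
    exact sum_fCap_le k hk hsum
end

section
/- Let Alice's input distribution on {0,1}² be written as the vector (p₀₀, p₀₁, p₁₀, p₁₁) with p₀₀+p₀₁ = p and p₁₀+p₁₁ = 1-p, and similarly Bob's with parameter q. For any product input distribution to Channel II, there exist α, β, γ, δ ∈ [0,1] with α+β+γ+δ ≤ 3 such that the probabilities of the four unerased output symbols satisfy Pr(00) = ε p q α, Pr(01) = ε p (1-q) β, Pr(10) = ε (1-p) q γ, Pr(11) = ε (1-p)(1-q) δ. -/
set_option maxHeartbeats 1000000

lemma auxS (x y z w : ℝ) (hx0 : 0 ≤ x) (hx1 : x ≤ 1) (hy0 : 0 ≤ y) (hy1 : y ≤ 1)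
    (hz0 : 0 ≤ z) (hz1 : z ≤ 1) (hw0 : 0 ≤ w) (hw1 : w ≤ 1) :
    (x*y+(1-x)*(1-y)) + (x*z+(1-x)*(1-z)) + (w*y+(1-w)*(1-y)) + (w*(1-z)+(1-w)*z) ≤ 3 := by
  nlinarith [mul_nonneg hx0 (sub_nonneg.2 hy1), mul_nonneg hy0 (sub_nonneg.2 hx1),
    mul_nonneg hx0 (sub_nonneg.2 hz1), mul_nonneg hy0 (sub_nonneg.2 hw1),
    mul_nonneg hz0 (sub_nonneg.2 hw1), mul_nonneg hw0 (sub_nonneg.2 hz1),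
    mul_nonneg hw0 (sub_nonneg.2 hy1), mul_nonneg hz0 (sub_nonneg.2 hx1),
    mul_nonneg (mul_nonneg hx0 hy0) (mul_nonneg hz0 hw0)]

lemma choose_t (A P : ℝ) (h0 : 0 ≤ A) (hAP : A ≤ P) :
    ∃ t, t ∈ Set.Icc (0:ℝ) 1 ∧ A = P * t ∧ (P = 0 → t = 0) ∧ (P ≠ 0 → t = A / P) := by
  rcases eq_or_ne P 0 with hP | hP
  · refine ⟨0, ⟨le_refl _, zero_le_one⟩, ?_, fun _ => rfl, fun h => absurd hP h⟩
    have : A = 0 := le_antisymm (hP ▸ hAP) h0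
    simp [this]
  · have hPpos : 0 < P := lt_of_le_of_ne (le_trans h0 hAP) (Ne.symm hP)
    refine ⟨A / P, ⟨div_nonneg h0 hPpos.le, (div_le_one hPpos).2 hAP⟩, ?_, fun h => absurd h hP,
      fun _ => rfl⟩
    field_simp

/-- For any product input distribution to Channel II (Alice's distribution `pa`
on `{0,1}²`, Bob's `pb`, with `p`/`q` the probabilities that Alice's/Bob's
first bit is `0`), there exist `α, β, γ, δ ∈ [0,1]` with `α+β+γ+δ ≤ 3` such
that the unerased output probabilities satisfy `Pr(00) = ε p q α`,
`Pr(01) = ε p (1-q) β`, `Pr(10) = ε (1-p) q γ`, `Pr(11) = ε (1-p)(1-q) δ`.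
Two-bit words are `Bool × Bool` with `false = 0`; the unerased cells of
Channel II are `(00,00),(01,01) ↦ 00`; `(00,10),(01,11) ↦ 01`;
`(10,00),(11,01) ↦ 10`; `(10,11),(11,10) ↦ 11`, each delivered with
probability `ε`. -/
theorem channelII_output_probabilities (ε p q : ℝ) (pa pb : Bool × Bool → ℝ)
    (hε0 : 0 ≤ ε) (hε1 : ε ≤ 1)
    (hpa : ∀ v, 0 ≤ pa v) (hpb : ∀ v, 0 ≤ pb v)
    (hpa1 : ∑ v : Bool × Bool, pa v = 1) (hpb1 : ∑ v : Bool × Bool, pb v = 1)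
    (hp : p = pa (false, false) + pa (false, true))
    (hq : q = pb (false, false) + pb (false, true)) :
    ∃ α β γ δ : ℝ,
      α ∈ Set.Icc (0:ℝ) 1 ∧ β ∈ Set.Icc (0:ℝ) 1 ∧
      γ ∈ Set.Icc (0:ℝ) 1 ∧ δ ∈ Set.Icc (0:ℝ) 1 ∧
      α + β + γ + δ ≤ 3 ∧
      ε * (pa (false, false) * pb (false, false) + pa (false, true) * pb (false, true))
        = ε * p * q * α ∧
      ε * (pa (false, false) * pb (true, false) + pa (false, true) * pb (true, true))
        = ε * p * (1 - q) * β ∧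
      ε * (pa (true, false) * pb (false, false) + pa (true, true) * pb (false, true))
        = ε * (1 - p) * q * γ ∧
      ε * (pa (true, false) * pb (true, true) + pa (true, true) * pb (true, false))
        = ε * (1 - p) * (1 - q) * δ := by
  set a := pa (false, false) with ha
  set b := pa (false, true) with hb
  set c := pa (true, false) with hc
  set d := pa (true, true) with hd
  set e := pb (false, false) with he
  set f := pb (false, true) with hf
  set g := pb (true, false) with hg
  set h := pb (true, true) with hh
  have ha0 : 0 ≤ a := hpa _
  have hb0 : 0 ≤ b := hpa _
  have hc0 : 0 ≤ c := hpa _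
  have hd0 : 0 ≤ d := hpa _
  have he0 : 0 ≤ e := hpb _
  have hf0 : 0 ≤ f := hpb _
  have hg0 : 0 ≤ g := hpb _
  have hh0 : 0 ≤ h := hpb _
  have hsa : a + b + c + d = 1 := by
    rw [Fintype.sum_prod_type] at hpa1
    simp only [Fintype.sum_bool] at hpa1
    linarith [hpa1]
  have hsb : e + f + g + h = 1 := by
    rw [Fintype.sum_prod_type] at hpb1
    simp only [Fintype.sum_bool] at hpb1
    linarith [hpb1]
  have hp' : 1 - p = c + d := by rw [hp]; linarith
  have hq' : 1 - q = g + h := by rw [hq]; linarith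
  -- the four numerators and their bounds
  obtain ⟨α, hαI, hαe, hα0, hαd⟩ := choose_t (a*e + b*f) (p*q) (by positivity)
    (by rw [hp, hq]; nlinarith [mul_nonneg ha0 hf0, mul_nonneg hb0 he0])
  obtain ⟨β, hβI, hβe, hβ0, hβd⟩ := choose_t (a*g + b*h) (p*(1-q)) (by positivity)
    (by rw [hp, hq']; nlinarith [mul_nonneg ha0 hh0, mul_nonneg hb0 hg0])
  obtain ⟨γ, hγI, hγe, hγ0, hγd⟩ := choose_t (c*e + d*f) ((1-p)*q) (by positivity)
    (by rw [hp', hq]; nlinarith [mul_nonneg hc0 hf0, mul_nonneg hd0 he0])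
  obtain ⟨δ, hδI, hδe, hδ0, hδd⟩ := choose_t (c*h + d*g) ((1-p)*(1-q)) (by positivity)
    (by rw [hp', hq']; nlinarith [mul_nonneg hc0 hg0, mul_nonneg hd0 hh0])
  refine ⟨α, β, γ, δ, hαI, hβI, hγI, hδI, ?_, by rw [hαe]; ring, by rw [hβe]; ring,
    by rw [hγe]; ring, by rw [hδe]; ring⟩
  -- the sum bound
  rcases eq_or_ne (p*q) 0 with h1 | h1
  · have := hα0 h1
    linarith [hβI.2, hγI.2, hδI.2, this.le, this.ge]
  rcases eq_or_ne (p*(1-q)) 0 with h2 | h2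
  · have := hβ0 h2
    linarith [hαI.2, hγI.2, hδI.2, this.le, this.ge]
  rcases eq_or_ne ((1-p)*q) 0 with h3 | h3
  · have := hγ0 h3
    linarith [hαI.2, hβI.2, hδI.2, this.le, this.ge]
  rcases eq_or_ne ((1-p)*(1-q)) 0 with h4 | h4
  · have := hδ0 h4
    linarith [hαI.2, hβI.2, hγI.2, this.le, this.ge]
  -- all denominators nonzero, hence positive
  have hpq0 : 0 ≤ p := by rw [hp]; positivity
  have hq0 : 0 ≤ q := by rw [hq]; positivity
  have hp'0 : 0 ≤ 1 - p := by rw [hp']; positivity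
  have hq'0 : 0 ≤ 1 - q := by rw [hq']; positivity
  have hpP : 0 < p := lt_of_le_of_ne hpq0 (by rintro rfl; exact h1 (by ring))
  have hqP : 0 < q := lt_of_le_of_ne hq0 (by rintro h'; exact h1 (by rw [← h']; ring))
  have hp'P : 0 < 1 - p := lt_of_le_of_ne hp'0 (by rintro h'; exact h3 (by rw [← h']; ring))
  have hq'P : 0 < 1 - q := lt_of_le_of_ne hq'0 (by rintro h'; exact h4 (by rw [← h']; ring))
  -- express the t's via ratios
  have hxb : b = p - a := by rw [hp]; ring
  have hfb : f = q - e := by rw [hq]; ring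
  have hhb : h = (1-q) - g := by rw [hq']; ring
  have hdb : d = (1-p) - c := by rw [hp']; ring
  set x := a / p with hxd
  set y := e / q with hyd
  set z := g / (1-q) with hzd
  set w := c / (1-p) with hwd
  have hx0 : 0 ≤ x := div_nonneg ha0 hpP.le
  have hx1 : x ≤ 1 := (div_le_one hpP).2 (by rw [hp]; linarith)
  have hy0 : 0 ≤ y := div_nonneg he0 hqP.le
  have hy1 : y ≤ 1 := (div_le_one hqP).2 (by rw [hq]; linarith)
  have hz0 : 0 ≤ z := div_nonneg hg0 hq'P.le
  have hz1 : z ≤ 1 := (div_le_one hq'P).2 (by rw [hq']; linarith)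
  have hw0 : 0 ≤ w := div_nonneg hc0 hp'P.le
  have hw1 : w ≤ 1 := (div_le_one hp'P).2 (by rw [hp']; linarith)
  have hαx : α = x*y + (1-x)*(1-y) := by
    rw [hαd h1, hxd, hyd, hxb, hfb]; field_simp; try ring
  have hβx : β = x*z + (1-x)*(1-z) := by
    rw [hβd h2, hxd, hzd, hxb, hhb]; field_simp; try ring
  have hγx : γ = w*y + (1-w)*(1-y) := by
    rw [hγd h3, hwd, hyd, hdb, hfb]; field_simp; try ring
  have hδx : δ = w*(1-z) + (1-w)*z := by
    rw [hδd h4, hwd, hzd, hdb, hhb]; field_simp; try ring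
  rw [hαx, hβx, hγx, hδx]
  exact auxS x y z w hx0 hx1 hy0 hy1 hz0 hz1 hw0 hw1
end
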